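/- arXiv:1704.05292 — 2 statements merged into one kernel-verified Lean document; each statement's English description precedes it below -/
import Mathlib

section
/- For all real α > −1/2, x_d > 0, y_d > 0, the kernel W_α satisfies the normalization identity ∫_0^∞ W_α(x_d, y_d, ρ) ρ^{2α+1} dρ = 1. -/
/-!
Substituting `u = ρ²` turns `W_α(x_d, y_d, ρ) ρ^{2α+1} dρ` into a constant multiple of
`(u - a)^{α-1/2} (b - u)^{α-1/2} du` on `(a, b) = ((x_d - y_d)², (x_d + y_d)²)`. This is a Beta
integral, equal to `(b - a)^{2α} B(α + 1/2, α + 1/2)` with `b - a = 4 x_d y_d`, and Legendre's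
duplication formula `Γ(α + 1/2) Γ(α + 1) = 2^{-2α} √π Γ(2α + 1)` shows that the constant
is `1`.
-/

open MeasureTheory Real Set
open scoped ENNReal RealInnerProductSpace

noncomputable section

/-- The upper half space `ℝ^{d-1} × (0,∞)` sits inside `Pt d`, the set of pairs
`(x', x_d)` with `x' ∈ ℝ^{d-1}` (Euclidean) and `x_d ∈ ℝ`. -/
abbrev Pt (d : ℕ) : Type := EuclideanSpace ℝ (Fin (d - 1)) × ℝ

/-- Euclidean norm on `Pt d`. -/
def euclNorm {d : ℕ} (p : Pt d) : ℝ := Real.sqrt (‖p.1‖ ^ 2 + p.2 ^ 2)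

/-- The measure `ν_α` on the half space: `dν_α(x) = x_d^{2α+1}/((2π)^{(d-1)/2} 2^α Γ(α+1)) dx`,
supported on `{x_d > 0}`. -/
def nu (α : ℝ) (d : ℕ) : Measure (Pt d) :=
  (((volume : Measure (EuclideanSpace ℝ (Fin (d - 1)))).prod
      ((volume : Measure ℝ).withDensity fun t =>
        ENNReal.ofReal (t ^ (2 * α + 1) /
          ((2 * π) ^ ((d - 1 : ℝ) / 2) * 2 ^ α * Real.Gamma (α + 1))))).restrict
    {p : Pt d | 0 < p.2})

/-- The half ball `B^+(x,ε)`: intersection of the closed Euclidean ball of radius `ε`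
centered at `x` with `ℝ^{d-1} × [0,∞)`. -/
def Bplus {d : ℕ} (x : Pt d) (ε : ℝ) : Set (Pt d) :=
  {p : Pt d | euclNorm (p - x) ≤ ε ∧ 0 ≤ p.2}

/-- The box `C^+(x,ε) = B_{d-1}(x',ε) × (max{0, x_d-ε}, x_d+ε)`. -/
def Cplus {d : ℕ} (x : Pt d) (ε : ℝ) : Set (Pt d) :=
  {p : Pt d | ‖p.1 - x.1‖ ≤ ε ∧ p.2 ∈ Set.Ioo (max 0 (x.2 - ε)) (x.2 + ε)}

/-- The Weinstein kernel `W_α(x_d, y_d, ρ)`. -/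
def Wker (α xd yd ρ : ℝ) : ℝ :=
  if |xd - yd| < ρ ∧ ρ < xd + yd then
    Real.Gamma (α + 1) * ((xd + yd) ^ 2 - ρ ^ 2) ^ (α - 1 / 2) *
      (ρ ^ 2 - (xd - yd) ^ 2) ^ (α - 1 / 2) /
      (2 ^ (2 * α - 1) * Real.sqrt π * Real.Gamma (α + 1 / 2) * (xd * yd * ρ) ^ (2 * α))
  else 0

/-- The Weinstein translate `τ_x(χ_{B^+(0,ε)})(-y', y_d)
  = ∫_0^∞ χ_{B^+(0,ε)}(x'-y', ρ) W_α(x_d, y_d, ρ) ρ^{2α+1} dρ`. -/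
def tauChi (α : ℝ) {d : ℕ} (ε : ℝ) (x y : Pt d) : ℝ :=
  ∫ ρ in Set.Ioi (0 : ℝ),
    (Bplus (0 : Pt d) ε).indicator (fun _ => (1 : ℝ)) (x.1 - y.1, ρ) *
      Wker α x.2 y.2 ρ * ρ ^ (2 * α + 1)

/-- The normalized Bessel function `j_γ` of order `γ > -1/2`, via Poisson's integral
representation. -/
def besselj (γ z : ℝ) : ℝ :=
  Real.Gamma (γ + 1) / (Real.sqrt π * Real.Gamma (γ + 1 / 2)) *
    ∫ t in Set.Icc (-1 : ℝ) 1, (1 - t ^ 2) ^ (γ - 1 / 2) * Real.cos (z * t)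

/-- The Weinstein transform of the characteristic function of `B^+(0,ε)`:
`F_W(χ_{B^+(0,ε)})(λ) = ∫_{B^+(0,ε)} e^{-i⟨y',λ'⟩} j_α(y_d λ_d) dν_α(y)`. -/
def FWchi (α : ℝ) (d : ℕ) (ε : ℝ) (lam : Pt d) : ℂ :=
  ∫ y in Bplus (0 : Pt d) ε,
    Complex.exp (-(Complex.I * ((inner ℝ y.1 lam.1 : ℝ) : ℂ))) *
      ((besselj α (y.2 * lam.2) : ℝ) : ℂ) ∂(nu α d)

/-- The uncentered maximal function `M_α f`. -/
def Mmax (α : ℝ) (d : ℕ) (f : Pt d → ℝ) (x : Pt d) : ℝ≥0∞ :=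
  ⨆ (ε : ℝ) (_ : 0 < ε) (z : Pt d) (_ : z ∈ Bplus x ε),
    ENNReal.ofReal |∫ y, f y * tauChi α ε z y ∂(nu α d)| / nu α d (Bplus (0 : Pt d) ε)

/-- The auxiliary uncentered maximal function `M̃_α f`. -/
def Mtilde (α : ℝ) (d : ℕ) (f : Pt d → ℝ) (x : Pt d) : ℝ≥0∞ :=
  ⨆ (ε : ℝ) (_ : 0 < ε) (z : Pt d) (_ : z ∈ Bplus x ε),
    (∫⁻ y in Bplus z ε, ENNReal.ofReal |f y| ∂(nu α d)) / nu α d (Bplus z ε)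

open ProbabilityTheory

theorem integral_Ioo_rpow_mul_one_sub_rpow {p q : ℝ} (hp : 0 < p) (hq : 0 < q) :
    ∫ x in Ioo (0 : ℝ) 1, x ^ (p - 1) * (1 - x) ^ (q - 1) = beta p q := by
  have hB := Complex.Gamma_mul_Gamma_eq_betaIntegral (s := (p : ℂ)) (t := (q : ℂ))
    (by simpa using hp) (by simpa using hq)
  have hreal : Complex.betaIntegral p q =
      ((∫ x in Ioo (0 : ℝ) 1, x ^ (p - 1) * (1 - x) ^ (q - 1) : ℝ) : ℂ) := by
    rw [Complex.betaIntegral, ← integral_Ioc_eq_integral_Ioo,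
      ← intervalIntegral.integral_of_le zero_le_one, ← intervalIntegral.integral_ofReal]
    refine intervalIntegral.integral_congr fun x hx => ?_
    rw [uIcc_of_le zero_le_one] at hx
    push_cast
    rw [Complex.ofReal_cpow hx.1, Complex.ofReal_cpow (sub_nonneg.2 hx.2)]
    push_cast
    ring_nf
  rw [hreal, ← Complex.ofReal_add, Complex.Gamma_ofReal, Complex.Gamma_ofReal,
    Complex.Gamma_ofReal, ← Complex.ofReal_mul, ← Complex.ofReal_mul] at hB
  rw [beta, eq_div_iff (Gamma_pos_of_pos (add_pos hp hq)).ne', mul_comm]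
  exact_mod_cast hB.symm

theorem integral_Ioo_sub_rpow_mul_sub_rpow {a b p q : ℝ} (hab : a < b) (hp : 0 < p)
    (hq : 0 < q) :
    ∫ u in Ioo a b, (u - a) ^ (p - 1) * (b - u) ^ (q - 1) = (b - a) ^ (p + q - 1) * beta p q := by
  have hba : 0 < b - a := sub_pos.2 hab
  have hscale :
      ∫ x in (0 : ℝ)..1, ((b - a) * x + a - a) ^ (p - 1) * (b - ((b - a) * x + a)) ^ (q - 1)
        = (b - a) ^ (p + q - 2) * ∫ x in (0 : ℝ)..1, x ^ (p - 1) * (1 - x) ^ (q - 1) := by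
    rw [← intervalIntegral.integral_const_mul]
    refine intervalIntegral.integral_congr fun x hx => ?_
    rw [uIcc_of_le zero_le_one] at hx
    rw [add_sub_cancel_right, show b - ((b - a) * x + a) = (b - a) * (1 - x) by ring,
      mul_rpow hba.le hx.1, mul_rpow hba.le (sub_nonneg.2 hx.2),
      show p + q - 2 = (p - 1) + (q - 1) by ring, rpow_add hba]
    ring
  rw [intervalIntegral.integral_comp_mul_add (fun u => (u - a) ^ (p - 1) * (b - u) ^ (q - 1))
    hba.ne', mul_zero, zero_add, mul_one, sub_add_cancel, intervalIntegral.integral_of_le hab.le,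
    integral_Ioc_eq_integral_Ioo, intervalIntegral.integral_of_le zero_le_one,
    integral_Ioc_eq_integral_Ioo, integral_Ioo_rpow_mul_one_sub_rpow hp hq, smul_eq_mul,
    inv_mul_eq_iff_eq_mul₀ hba.ne', ← mul_assoc] at hscale
  rw [hscale, show p + q - 1 = 1 + (p + q - 2) by ring, rpow_add hba, rpow_one]

theorem two_rpow_mul_Gamma_add_one_mul_beta_self {α : ℝ} (hα : -(1 / 2 : ℝ) < α) :
    2 ^ (2 * α) * Gamma (α + 1) * beta (α + 1 / 2) (α + 1 / 2) =
      √π * Gamma (α + 1 / 2) := by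
  have hdup := Gamma_mul_Gamma_add_half (α + 1 / 2)
  rw [show α + 1 / 2 + 1 / 2 = α + 1 by ring, show 2 * (α + 1 / 2) = 2 * α + 1 by ring,
    show 1 - (2 * α + 1) = -(2 * α) by ring, rpow_neg zero_le_two] at hdup
  have hΓ : Gamma (2 * α + 1) ≠ 0 := (Gamma_pos_of_pos (by linarith)).ne'
  calc 2 ^ (2 * α) * Gamma (α + 1) * beta (α + 1 / 2) (α + 1 / 2)
      = Gamma (α + 1 / 2) * (2 ^ (2 * α) * (Gamma (α + 1 / 2) * Gamma (α + 1)))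
          / Gamma (2 * α + 1) := by
        rw [beta, show α + 1 / 2 + (α + 1 / 2) = 2 * α + 1 by ring]
        ring
    _ = √π * Gamma (α + 1 / 2) := by
        rw [hdup]
        generalize Gamma (2 * α + 1) = Γ₂ at hΓ ⊢
        field_simp

/-- The kernel in the variable `u = ρ ^ 2`:
`Wker α xd yd ρ * ρ ^ (2 * α + 1) dρ = wkerSq α xd yd u du`. -/
def wkerSq (α xd yd : ℝ) : ℝ → ℝ :=
  (Ioo ((xd - yd) ^ 2) ((xd + yd) ^ 2)).indicator fun u =>
    Gamma (α + 1) / (2 ^ (2 * α) * √π * Gamma (α + 1 / 2) * (xd * yd) ^ (2 * α)) *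
      ((u - (xd - yd) ^ 2) ^ (α - 1 / 2) * ((xd + yd) ^ 2 - u) ^ (α - 1 / 2))

theorem integral_wkerSq {α xd yd : ℝ} (hα : -(1 / 2 : ℝ) < α) (hxd : 0 < xd) (hyd : 0 < yd) :
    ∫ u in Ioi 0, wkerSq α xd yd u = 1 := by
  have hsub : Ioo ((xd - yd) ^ 2) ((xd + yd) ^ 2) ⊆ Ioi 0 := fun u hu =>
    (sq_nonneg _).trans_lt hu.1
  have hlt : (xd - yd) ^ 2 < (xd + yd) ^ 2 := by nlinarith [mul_pos hxd hyd]
  have hbeta := two_rpow_mul_Gamma_add_one_mul_beta_self hα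
  have hden : 2 ^ (2 * α) * √π * Gamma (α + 1 / 2) * (xd * yd) ^ (2 * α) ≠ 0 := by
    have := Gamma_pos_of_pos (show 0 < α + 1 / 2 by linarith)
    positivity
  rw [wkerSq, setIntegral_indicator measurableSet_Ioo, inter_eq_right.2 hsub, integral_const_mul,
    show α - 1 / 2 = α + 1 / 2 - 1 by ring,
    integral_Ioo_sub_rpow_mul_sub_rpow hlt (by linarith) (by linarith),
    show (xd + yd) ^ 2 - (xd - yd) ^ 2 = 2 * 2 * (xd * yd) by ring,
    show α + 1 / 2 + (α + 1 / 2) - 1 = 2 * α by ring,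
    mul_rpow (by norm_num : (0 : ℝ) ≤ 2 * 2) (mul_nonneg hxd.le hyd.le),
    mul_rpow zero_le_two zero_le_two, div_mul_eq_mul_div, div_eq_one_iff_eq hden]
  linear_combination 2 ^ (2 * α) * (xd * yd) ^ (2 * α) * hbeta

theorem Wker_mul_rpow_eq {α xd yd ρ : ℝ} (hxd : 0 ≤ xd) (hyd : 0 ≤ yd) (hρ : 0 < ρ) :
    Wker α xd yd ρ * ρ ^ (2 * α + 1) = 2 * ρ * wkerSq α xd yd (ρ ^ 2) := by
  have hsupp :
      |xd - yd| < ρ ∧ ρ < xd + yd ↔ ρ ^ 2 ∈ Ioo ((xd - yd) ^ 2) ((xd + yd) ^ 2) := by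
    rw [mem_Ioo, ← sq_abs (xd - yd), sq_lt_sq₀ (abs_nonneg _) hρ.le,
      sq_lt_sq₀ hρ.le (add_nonneg hxd hyd)]
  have h2 : (2 : ℝ) ^ (2 * α) = 2 ^ (2 * α - 1) * 2 := by
    rw [← rpow_add_one two_ne_zero, sub_add_cancel]
  rw [Wker, wkerSq]
  by_cases h : |xd - yd| < ρ ∧ ρ < xd + yd
  · rw [if_pos h, indicator_of_mem (hsupp.1 h), mul_rpow (mul_nonneg hxd hyd) hρ.le,
      rpow_add hρ, rpow_one, h2]
    have : ρ ^ (2 * α) ≠ 0 := by positivity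
    field_simp
  · rw [if_neg h, indicator_of_notMem (mt hsupp.2 h), zero_mul, mul_zero]

/-- For all real `α > -1/2`, `x_d > 0`, `y_d > 0`, the kernel `W_α` satisfies
`∫_0^∞ W_α(x_d, y_d, ρ) ρ^{2α+1} dρ = 1`. -/
theorem weinstein_kernel_normalization (α : ℝ) (hα : -(1/2 : ℝ) < α)
    (xd yd : ℝ) (hxd : 0 < xd) (hyd : 0 < yd) :
    ∫ ρ in Set.Ioi (0 : ℝ), Wker α xd yd ρ * ρ ^ (2 * α + 1) = 1 := by
  calc ∫ ρ in Ioi (0 : ℝ), Wker α xd yd ρ * ρ ^ (2 * α + 1)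
      = ∫ ρ in Ioi (0 : ℝ),
          (2 * ρ ^ ((2 : ℝ) - 1)) • wkerSq α xd yd (ρ ^ (2 : ℝ)) := by
        refine setIntegral_congr_fun measurableSet_Ioi fun ρ hρ => ?_
        rw [Wker_mul_rpow_eq hxd.le hyd.le hρ, smul_eq_mul]
        norm_num
    _ = ∫ u in Ioi 0, wkerSq α xd yd u := integral_comp_rpow_Ioi_of_pos two_pos
    _ = 1 := integral_wkerSq hα hxd hyd

end
end

section
/- There exists a constant c > 0, depending only on α and d, such that for every x ∈ ℝ^d_+ with x_d > ε and every ε > 0, ν_α(C^+(x,ε)) ≤ c ν_α(B^+(0,ε)) (x_d / ε)^{2α+1}. -/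
open MeasureTheory Real Set
open scoped ENNReal RealInnerProductSpace

noncomputable section

/-! A box `C^+(x,ε)` is the product of a ball of radius `ε` with an interval of length at most
`2ε` on which the weight `t^{2α+1}` is at most `(2x_d)^{2α+1}`, while `B^+(0,ε)` contains the
product of the ball of radius `ε/2` with `(ε/4, ε/2)`, on which the weight is at least
`(ε/4)^{2α+1}`. Comparing the two products factor by factor gives
`c = 2^{d-1} · 8^{2α+2}`. -/

section WithDensity

variable {X : Type*} [MeasurableSpace X] {μ : Measure X} {f : X → ℝ≥0∞} {s : Set X} {C : ℝ≥0∞}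

lemma withDensity_apply_le_mul_of_le (hs : MeasurableSet s) (hf : ∀ x ∈ s, f x ≤ C) :
    μ.withDensity f s ≤ C * μ s := by
  rw [withDensity_apply _ hs, ← setLIntegral_const]
  exact setLIntegral_mono' hs hf

lemma mul_le_withDensity_apply_of_le (hs : MeasurableSet s) (hf : ∀ x ∈ s, C ≤ f x) :
    C * μ s ≤ μ.withDensity f s := by
  rw [withDensity_apply _ hs, ← setLIntegral_const]
  exact setLIntegral_mono' hs hf

end WithDensity

lemma two_mul_rpow_mul_eq {β K x ε : ℝ} (hx : 0 ≤ x) (hε : 0 < ε) :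
    (2 * x) ^ β / K * (2 * ε) = 8 ^ (β + 1) * (x / ε) ^ β * ((ε / 4) ^ β / K * (ε / 4)) := by
  have hrpow : (2 * x) ^ β = 8 ^ β * (x / ε) ^ β * (ε / 4) ^ β := by
    rw [← Real.mul_rpow (by norm_num) (by positivity), ← Real.mul_rpow (by positivity)
      (by positivity)]
    congr 1
    field_simp
    ring
  rw [hrpow, Real.rpow_add_one (by norm_num)]
  ring

def nuConst (α : ℝ) (d : ℕ) : ℝ :=
  (2 * π) ^ ((d - 1 : ℝ) / 2) * 2 ^ α * Real.Gamma (α + 1)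

def nuVert (α : ℝ) (d : ℕ) : Measure ℝ :=
  volume.withDensity fun t => ENNReal.ofReal (t ^ (2 * α + 1) / nuConst α d)

section Measure

variable {α : ℝ} {d : ℕ}

lemma nuConst_pos (hα : -1 < α) : 0 < nuConst α d := by
  have hΓ := Real.Gamma_pos_of_pos (show 0 < α + 1 by linarith)
  exact mul_pos (mul_pos (Real.rpow_pos_of_pos (by positivity) _)
    (Real.rpow_pos_of_pos two_pos _)) hΓ

lemma nu_prod {s : Set (EuclideanSpace ℝ (Fin (d - 1)))} {I : Set ℝ} (hs : MeasurableSet s)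
    (hI : MeasurableSet I) (hI₀ : I ⊆ Ioi 0) : nu α d (s ×ˢ I) = volume s * nuVert α d I := by
  have hpos : s ×ˢ I ⊆ {p : Pt d | 0 < p.2} := fun p hp => hI₀ hp.2
  rw [nu, Measure.restrict_apply (hs.prod hI), inter_eq_left.mpr hpos, Measure.prod_prod]
  rfl

lemma nuVert_Ioo_le (hα : -(1 / 2) ≤ α) {a b : ℝ} (ha : 0 ≤ a) (hab : a ≤ b) :
    nuVert α d (Ioo a b) ≤ ENNReal.ofReal (b ^ (2 * α + 1) / nuConst α d * (b - a)) := by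
  rw [ENNReal.ofReal_mul (div_nonneg (Real.rpow_nonneg (ha.trans hab) _)
      (nuConst_pos (by linarith)).le),
    ← Real.volume_Ioo]
  refine withDensity_apply_le_mul_of_le measurableSet_Ioo fun t ht => ?_
  gcongr
  · exact (nuConst_pos (by linarith)).le
  · exact ha.trans ht.1.le
  · linarith
  · exact ht.2.le

lemma ofReal_mul_le_nuVert_Ioo (hα : -(1 / 2) ≤ α) {a b : ℝ} (ha : 0 ≤ a) :
    ENNReal.ofReal (a ^ (2 * α + 1) / nuConst α d * (b - a)) ≤ nuVert α d (Ioo a b) := by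
  rw [ENNReal.ofReal_mul (div_nonneg (by positivity) (nuConst_pos (by linarith)).le),
    ← Real.volume_Ioo]
  refine mul_le_withDensity_apply_of_le measurableSet_Ioo fun t ht => ?_
  gcongr
  · exact (nuConst_pos (by linarith)).le
  · linarith
  · exact ht.1.le

lemma nuVert_Ioo_le_mul_nuVert_Ioo (hα : -(1 / 2) ≤ α) {x ε : ℝ} (hε : 0 < ε)
    (hεx : ε < x) :
    nuVert α d (Ioo (max 0 (x - ε)) (x + ε)) ≤
      ENNReal.ofReal (8 ^ (2 * α + 2) * (x / ε) ^ (2 * α + 1)) * nuVert α d (Ioo 0 (ε / 2)) := by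
  have hK := nuConst_pos (d := d) (show -1 < α by linarith)
  have hβ : 0 ≤ 2 * α + 1 := by linarith
  rw [max_eq_right (by linarith)]
  have hc : 0 ≤ 8 ^ (2 * α + 2) * (x / ε) ^ (2 * α + 1) :=
    mul_nonneg (by positivity) (Real.rpow_nonneg (div_nonneg (by linarith) hε.le) _)
  calc nuVert α d (Ioo (x - ε) (x + ε))
      ≤ ENNReal.ofReal ((x + ε) ^ (2 * α + 1) / nuConst α d * ((x + ε) - (x - ε))) :=
        nuVert_Ioo_le hα (by linarith) (by linarith)
    _ ≤ ENNReal.ofReal ((2 * x) ^ (2 * α + 1) / nuConst α d * (2 * ε)) := by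
        rw [show x + ε - (x - ε) = 2 * ε by ring]
        gcongr <;> first | exact hK.le | linarith
    _ = ENNReal.ofReal (8 ^ (2 * α + 2) * (x / ε) ^ (2 * α + 1)) *
          ENNReal.ofReal ((ε / 4) ^ (2 * α + 1) / nuConst α d * (ε / 2 - ε / 4)) := by
        rw [← ENNReal.ofReal_mul hc, two_mul_rpow_mul_eq (by linarith) hε]
        ring_nf
    _ ≤ ENNReal.ofReal (8 ^ (2 * α + 2) * (x / ε) ^ (2 * α + 1)) *
          nuVert α d (Ioo 0 (ε / 2)) := by
        gcongr
        exact (ofReal_mul_le_nuVert_Ioo hα (by positivity)).trans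
          (measure_mono (Ioo_subset_Ioo (by positivity) le_rfl))

end Measure

lemma Cplus_eq_prod {d : ℕ} (x : Pt d) (ε : ℝ) :
    Cplus x ε = Metric.closedBall x.1 ε ×ˢ Ioo (max 0 (x.2 - ε)) (x.2 + ε) := by
  ext p
  simp [Cplus, Metric.mem_closedBall, dist_eq_norm]

lemma closedBall_prod_Ioo_subset_Bplus {d : ℕ} {ε : ℝ} (hε : 0 ≤ ε) :
    Metric.closedBall (0 : EuclideanSpace ℝ (Fin (d - 1))) (ε / 2) ×ˢ Ioo 0 (ε / 2) ⊆
      Bplus (0 : Pt d) ε := by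
  rintro p ⟨hp₁, hp₂, hp₂'⟩
  rw [mem_closedBall_zero_iff] at hp₁
  refine ⟨?_, hp₂.le⟩
  rw [euclNorm, sub_zero, Real.sqrt_le_left hε]
  nlinarith [norm_nonneg p.1]

theorem measure_Cplus_le_large_general (α : ℝ) (hα : -(1/2 : ℝ) < α) (d : ℕ) :
    ∃ c : ℝ, 0 < c ∧ ∀ ε : ℝ, 0 < ε → ∀ x : Pt d, 0 < x.2 → ε < x.2 →
      nu α d (Cplus x ε) ≤
        ENNReal.ofReal (c * (x.2 / ε) ^ (2 * α + 1)) * nu α d (Bplus (0 : Pt d) ε) := by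
  refine ⟨2 ^ (d - 1) * 8 ^ (2 * α + 2), by positivity, fun ε hε x _ hεx => ?_⟩
  have hball := Measure.addHaar_closedBall_mul volume x.1 zero_le_two (by positivity : 0 ≤ ε / 2)
  rw [finrank_euclideanSpace_fin, mul_div_cancel₀ _ two_ne_zero] at hball
  calc nu α d (Cplus x ε)
      = volume (Metric.closedBall x.1 ε) * nuVert α d (Ioo (max 0 (x.2 - ε)) (x.2 + ε)) := by
        rw [Cplus_eq_prod, nu_prod Metric.isClosed_closedBall.measurableSet measurableSet_Ioo
          fun t ht => (le_max_left _ _).trans_lt ht.1]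
    _ ≤ ENNReal.ofReal (2 ^ (d - 1)) *
          volume (Metric.closedBall (0 : EuclideanSpace ℝ (Fin (d - 1))) (ε / 2)) *
          (ENNReal.ofReal (8 ^ (2 * α + 2) * (x.2 / ε) ^ (2 * α + 1)) *
            nuVert α d (Ioo 0 (ε / 2))) := by
        rw [hball]
        gcongr
        exact nuVert_Ioo_le_mul_nuVert_Ioo hα.le hε hεx
    _ = ENNReal.ofReal (2 ^ (d - 1) * 8 ^ (2 * α + 2) * (x.2 / ε) ^ (2 * α + 1)) *
          nu α d (Metric.closedBall 0 (ε / 2) ×ˢ Ioo 0 (ε / 2)) := by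
        rw [nu_prod Metric.isClosed_closedBall.measurableSet measurableSet_Ioo fun t ht => ht.1,
          mul_assoc (2 ^ (d - 1) : ℝ), ENNReal.ofReal_mul (p := 2 ^ (d - 1)) (by positivity)]
        ring
    _ ≤ _ := by
        gcongr
        exact closedBall_prod_Ioo_subset_Bplus hε.le

/-- There is `c > 0` depending only on `α` and `d` such that for every
`ε > 0` and every `x ∈ ℝ^d_+` with `x_d > ε`,
`ν_α(C^+(x,ε)) ≤ c ν_α(B^+(0,ε)) (x_d/ε)^{2α+1}`. -/
theorem measure_Cplus_le_large (α : ℝ) (hα : -(1/2 : ℝ) < α) (d : ℕ) (hd : 2 ≤ d) :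
    ∃ c : ℝ, 0 < c ∧ ∀ ε : ℝ, 0 < ε → ∀ x : Pt d, 0 < x.2 → ε < x.2 →
      nu α d (Cplus x ε) ≤
        ENNReal.ofReal (c * (x.2 / ε) ^ (2 * α + 1)) * nu α d (Bplus (0 : Pt d) ε) :=
  measure_Cplus_le_large_general α hα d
end
end
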